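/- Let n < k be odd coprime positive integers, ω a primitive (2nk)-th root of unity, and in A = k⟨u,v⟩/(vu+uv) set x₁ = (uⁿ + (-1)^{(3k+n)/2} vⁿ)(uv)^{(3k-n)/2} and x₂ = (uⁿ + (-1)^{(k+n)/2} vⁿ)(uv)^{(k-n)/2}. Then x₁x₂ + x₂x₁ = (-1)^{(n-1)/2}·4·(uv)^{2k}. -/
import Mathlib


/-- The defining relation of the `(-1)`-quantum plane: `v * u = -(u * v)`. -/
inductive NegQRel (K : Type*) [Field K] :
    FreeAlgebra K (Fin 2) → FreeAlgebra K (Fin 2) → Prop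
  | rel : NegQRel K (FreeAlgebra.ι K 1 * FreeAlgebra.ι K 0)
      (-(FreeAlgebra.ι K 0 * FreeAlgebra.ι K 1))

/-- The `(-1)`-quantum plane `k_{-1}[u,v] = k⟨u,v⟩/(vu + uv)`. -/
abbrev NegQPlane (K : Type*) [Field K] := RingQuot (NegQRel K)

/-- The generator `u` of the `(-1)`-quantum plane. -/
noncomputable def NegQPlane.u (K : Type*) [Field K] : NegQPlane K :=
  RingQuot.mkAlgHom K (NegQRel K) (FreeAlgebra.ι K 0)

/-- The generator `v` of the `(-1)`-quantum plane. -/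
noncomputable def NegQPlane.v (K : Type*) [Field K] : NegQPlane K :=
  RingQuot.mkAlgHom K (NegQRel K) (FreeAlgebra.ι K 1)

section AuxAnticomm

theorem anticomm_pow_right' {R : Type*} [Ring R] {a b : R} (h : b * a = -(a * b)) :
    ∀ n : ℕ, b * a ^ n = (-1 : R) ^ n * (a ^ n * b) := by
  intro n
  induction n with
  | zero => simp
  | succ m ih =>
      rw [pow_succ, ← mul_assoc, ih, mul_assoc, mul_assoc, h]
      simp [pow_succ, mul_assoc]

theorem anticomm_pow_pow' {R : Type*} [Ring R] {a b : R} (h : b * a = -(a * b)) :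
    ∀ m n : ℕ, b ^ m * a ^ n = (-1 : R) ^ (m * n) * (a ^ n * b ^ m) := by
  intro m n
  induction m with
  | zero => simp
  | succ l ih =>
      have e : n + l * n = (l + 1) * n := by ring
      rw [pow_succ, mul_assoc, anticomm_pow_right' h, ← mul_assoc,
        ((Commute.neg_one_right (b^l)).pow_right n).eq, mul_assoc, ← mul_assoc (b^l), ih,
        ← mul_assoc, ← mul_assoc, ← pow_add, e, mul_assoc, mul_assoc]

theorem uv_pow_even' {R : Type*} [Ring R] {u v : R} (h : v * u = -(u * v)) :
    ∀ m : ℕ, (u * v) ^ (2 * m) = (-1 : R) ^ m * (u ^ (2 * m) * v ^ (2 * m)) := by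
  intro m
  induction m with
  | zero => simp
  | succ l ih =>
      have e2 : 2 * (l + 1) = 2 * l + 2 := by ring
      have hsq : (u * v) * (u * v) = -(u ^ 2 * v ^ 2) := by
        rw [mul_assoc u v, ← mul_assoc v u, h, neg_mul, mul_neg, mul_assoc u v v,
          ← mul_assoc u u, ← sq, ← sq]
      have hvu2 : ∀ x : R, v ^ (2 * l) * (u ^ 2 * x) = u ^ 2 * (v ^ (2 * l) * x) := by
        intro x
        rw [← mul_assoc, anticomm_pow_pow' h (2 * l) 2,
          Even.neg_one_pow ⟨2 * l, by ring⟩, one_mul, mul_assoc]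
      have hu2 : ∀ y : R, u ^ (2 * l) * (u ^ 2 * y) = u ^ (2 * l + 2) * y := fun y => by
        rw [← mul_assoc, ← pow_add]
      rw [e2, pow_add, ih, sq, mul_assoc, hsq, mul_neg, mul_assoc, hvu2, hu2,
        ← pow_add v]
      rw [pow_succ (-1:R) l, mul_assoc, neg_one_mul]

theorem uv_pow_odd' {R : Type*} [Ring R] {u v : R} (h : v * u = -(u * v)) (p : ℕ) :
    (u * v) ^ (2 * p + 1) = (-1 : R) ^ p * (u ^ (2 * p + 1) * v ^ (2 * p + 1)) := by
  have hvu2 : v ^ (2 * p) * u = u * v ^ (2 * p) := by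
    have := anticomm_pow_pow' h (2 * p) 1
    simpa [Even.neg_one_pow (⟨p, by ring⟩ : Even (2 * p * 1))] using this
  rw [pow_succ, uv_pow_even' h, mul_assoc, mul_assoc, ← mul_assoc (v ^ (2*p)) u v, hvu2,
    mul_assoc u, ← mul_assoc (u ^ (2*p)) u, ← pow_succ, ← pow_succ]

theorem uv_prod_odd' {R : Type*} [Ring R] {u v : R} (h : v * u = -(u * v)) (p : ℕ) :
    u ^ (2 * p + 1) * v ^ (2 * p + 1) = (-1 : R) ^ p * (u * v) ^ (2 * p + 1) := by
  rw [uv_pow_odd' h p, ← mul_assoc, ← pow_add, Even.neg_one_pow ⟨p, rfl⟩, one_mul]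

theorem anticomm_core' {R : Type*} [Ring R] (A B t wa wb : R)
    (hBA : B * A = -(A * B)) (ht : t * t = 1)
    (htA : t * A = A * t) (htB : t * B = B * t)
    (htwa : t * wa = wa * t) (htwb : t * wb = wb * t)
    (hwaA : wa * A = -(t * (A * wa))) (hwaB : wa * B = -(t * (B * wa)))
    (hwbA : wb * A = t * (A * wb)) (hwbB : wb * B = t * (B * wb))
    (hww : wb * wa = wa * wb) :
    (A + t * B) * wa * ((A + -(t * B)) * wb) + (A + -(t * B)) * wb * ((A + t * B) * wa)
      = 4 * ((A * B) * (wa * wb)) := by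
  have ht' : ∀ x : R, t * (t * x) = x := fun x => by rw [← mul_assoc, ht, one_mul]
  have hAt : ∀ x : R, A * (t * x) = t * (A * x) := fun x => by
    rw [← mul_assoc, ← htA, mul_assoc]
  have hBt : ∀ x : R, B * (t * x) = t * (B * x) := fun x => by
    rw [← mul_assoc, ← htB, mul_assoc]
  have hwat : ∀ x : R, wa * (t * x) = t * (wa * x) := fun x => by
    rw [← mul_assoc, ← htwa, mul_assoc]
  have hwbt : ∀ x : R, wb * (t * x) = t * (wb * x) := fun x => by
    rw [← mul_assoc, ← htwb, mul_assoc]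
  have hwaA' : ∀ x : R, wa * (A * x) = -(t * (A * (wa * x))) := fun x => by
    rw [← mul_assoc, hwaA, neg_mul, mul_assoc, mul_assoc]
  have hwaB' : ∀ x : R, wa * (B * x) = -(t * (B * (wa * x))) := fun x => by
    rw [← mul_assoc, hwaB, neg_mul, mul_assoc, mul_assoc]
  have hwbA' : ∀ x : R, wb * (A * x) = t * (A * (wb * x)) := fun x => by
    rw [← mul_assoc, hwbA, mul_assoc, mul_assoc]
  have hwbB' : ∀ x : R, wb * (B * x) = t * (B * (wb * x)) := fun x => by
    rw [← mul_assoc, hwbB, mul_assoc, mul_assoc]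
  have hBA' : ∀ x : R, B * (A * x) = -(A * (B * x)) := fun x => by
    rw [← mul_assoc, hBA, neg_mul, mul_assoc]
  simp only [mul_add, add_mul, mul_neg, neg_mul, mul_assoc, neg_neg,
    hwaA', hwaB', hwbA', hwbB', hwaA, hwaB, hwbA, hwbB, hww, hBA', hBA,
    hAt, hBt, hwat, hwbt, ht', neg_add_rev]
  noncomm_ring

theorem genMain' {R : Type*} [Ring R] (u v : R) (h : v * u = -(u * v)) (p q : ℕ)
    (hpq : p ≤ q) :
    (u ^ (2*p+1) + (-1 : R) ^ (3*q+p+2) * v ^ (2*p+1)) * (u * v) ^ (3*q+1-p) *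
      ((u ^ (2*p+1) + (-1 : R) ^ (q+p+1) * v ^ (2*p+1)) * (u * v) ^ (q-p)) +
    (u ^ (2*p+1) + (-1 : R) ^ (q+p+1) * v ^ (2*p+1)) * (u * v) ^ (q-p) *
      ((u ^ (2*p+1) + (-1 : R) ^ (3*q+p+2) * v ^ (2*p+1)) * (u * v) ^ (3*q+1-p)) =
    (-1 : R) ^ p * 4 * (u * v) ^ (4*q+2) := by
  have hwu : (u * v) * u = -(u * (u * v)) := by rw [mul_assoc, h, mul_neg]
  have hwv : (u * v) * v = -(v * (u * v)) := by
    have h2 : v * (u * v) = -((u * v) * v) := by rw [← mul_assoc, h, neg_mul]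
    rw [h2, neg_neg]
  have hsq1 : ((-1 : R) ^ (p+q)) ^ 2 = 1 := by
    rw [← pow_mul]; exact Even.neg_one_pow ⟨p + q, by ring⟩
  have htn : ((-1 : R) ^ (p+q)) ^ (2*p+1) = (-1 : R) ^ (p+q) := by
    rw [pow_succ, pow_mul, hsq1, one_pow, one_mul]
  have s1 : (-1 : R) ^ (3*q+p+2) = (-1 : R) ^ (p+q) := by
    have e : 3*q+p+2 = (p+q) + 2*(q+1) := by omega
    rw [e, pow_add, pow_mul, neg_one_sq, one_pow, mul_one]
  have s2 : (-1 : R) ^ (q+p+1) = -((-1 : R) ^ (p+q)) := by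
    have e : q+p+1 = (p+q) + 1 := by omega
    rw [e, pow_succ, mul_neg_one]
  have sa : (-1 : R) ^ (3*q+1-p) = -((-1 : R) ^ (p+q)) := by
    have e : 3*q+1-p = ((p+q) + 1) + 2*(q-p) := by omega
    rw [e, pow_add, pow_add, pow_mul, neg_one_sq, one_pow, mul_one, pow_one, mul_neg_one]
  have sb : (-1 : R) ^ (q-p) = (-1 : R) ^ (p+q) := by
    have e : p+q = (q-p) + 2*p := by omega
    rw [e, pow_add, pow_mul, neg_one_sq, one_pow, mul_one]
  have hBA : v ^ (2*p+1) * u ^ (2*p+1) = -(u ^ (2*p+1) * v ^ (2*p+1)) := by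
    rw [anticomm_pow_pow' h, Odd.neg_one_pow ⟨2*p*p+2*p, by ring⟩, neg_one_mul]
  have ht : (-1 : R) ^ (p+q) * (-1 : R) ^ (p+q) = 1 := by
    rw [← pow_add]; exact Even.neg_one_pow ⟨p + q, rfl⟩
  have htc : ∀ x : R, (-1 : R) ^ (p+q) * x = x * (-1 : R) ^ (p+q) := fun x =>
    ((Commute.neg_one_left x).pow_left (p+q)).eq
  have hwaA : (u*v) ^ (3*q+1-p) * u ^ (2*p+1)
      = -((-1 : R) ^ (p+q) * (u ^ (2*p+1) * (u*v) ^ (3*q+1-p))) := by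
    rw [anticomm_pow_pow' hwu, pow_mul, sa, Odd.neg_pow ⟨p, by ring⟩, htn, neg_mul]
  have hwaB : (u*v) ^ (3*q+1-p) * v ^ (2*p+1)
      = -((-1 : R) ^ (p+q) * (v ^ (2*p+1) * (u*v) ^ (3*q+1-p))) := by
    rw [anticomm_pow_pow' hwv, pow_mul, sa, Odd.neg_pow ⟨p, by ring⟩, htn, neg_mul]
  have hwbA : (u*v) ^ (q-p) * u ^ (2*p+1)
      = (-1 : R) ^ (p+q) * (u ^ (2*p+1) * (u*v) ^ (q-p)) := by
    rw [anticomm_pow_pow' hwu, pow_mul, sb, htn]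
  have hwbB : (u*v) ^ (q-p) * v ^ (2*p+1)
      = (-1 : R) ^ (p+q) * (v ^ (2*p+1) * (u*v) ^ (q-p)) := by
    rw [anticomm_pow_pow' hwv, pow_mul, sb, htn]
  have hww : (u*v) ^ (q-p) * (u*v) ^ (3*q+1-p) = (u*v) ^ (3*q+1-p) * (u*v) ^ (q-p) := by
    rw [← pow_add, ← pow_add, Nat.add_comm]
  have e4 : 2*p+1 + ((3*q+1-p) + (q-p)) = 4*q+2 := by omega
  rw [s1, s2, neg_mul]
  rw [anticomm_core' (u ^ (2*p+1)) (v ^ (2*p+1)) ((-1 : R) ^ (p+q)) ((u*v) ^ (3*q+1-p))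
    ((u*v) ^ (q-p)) hBA ht (htc _) (htc _) (htc _) (htc _) hwaA hwaB hwbA hwbB hww]
  rw [uv_prod_odd' h p, ← pow_add, mul_assoc ((-1 : R) ^ p), ← pow_add, e4,
    ← mul_assoc, ← ((Commute.neg_one_left (4 : R)).pow_left p).eq]

theorem negQ_vu' {K : Type*} [Field K] :
    NegQPlane.v K * NegQPlane.u K = -(NegQPlane.u K * NegQPlane.v K) := by
  have h := RingQuot.mkAlgHom_rel K (NegQRel.rel (K := K))
  simpa [NegQPlane.u, NegQPlane.v] using h

theorem negQ_smul' {K : Type*} [Field K] (e : ℕ) (x : NegQPlane K) :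
    ((-1 : K) ^ e) • x = (-1 : NegQPlane K) ^ e * x := by
  have h1 : ((-1 : K) ^ e) • x = algebraMap K (NegQPlane K) ((-1) ^ e) * x :=
    Algebra.smul_def _ _
  rw [h1, map_pow, map_neg, map_one]

theorem negQ_smul4' {K : Type*} [Field K] (e : ℕ) (x : NegQPlane K) :
    ((-1 : K) ^ e * 4) • x = ((-1 : NegQPlane K) ^ e * 4) * x := by
  have h1 : ((-1 : K) ^ e * 4) • x = algebraMap K (NegQPlane K) ((-1) ^ e * 4) * x :=
    Algebra.smul_def _ _
  rw [h1, map_mul, map_pow, map_neg, map_one, map_ofNat]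

end AuxAnticomm

/-- Let `n < k` be odd coprime positive integers, `ω` a primitive `2nk`-th root of unity,
and in `k_{-1}[u,v]` set `x₁ = (uⁿ + (-1)^{(3k+n)/2} vⁿ)(uv)^{(3k-n)/2}` and
`x₂ = (uⁿ + (-1)^{(k+n)/2} vⁿ)(uv)^{(k-n)/2}`. Then
`x₁x₂ + x₂x₁ = (-1)^{(n-1)/2} · 4 · (uv)^{2k}`. -/
theorem negQPlane_x1x2_anticommutator {K : Type*} [Field K] [CharZero K]
    (n k : ℕ) (hn : Odd n) (hk : Odd k) (hcop : Nat.Coprime n k) (hnk : n < k)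
    (ω : K) (hω : IsPrimitiveRoot ω (2 * n * k))
    (x₁ x₂ : NegQPlane K)
    (h₁ : x₁ = (NegQPlane.u K ^ n + ((-1 : K) ^ ((3 * k + n) / 2)) • NegQPlane.v K ^ n) *
      (NegQPlane.u K * NegQPlane.v K) ^ ((3 * k - n) / 2))
    (h₂ : x₂ = (NegQPlane.u K ^ n + ((-1 : K) ^ ((k + n) / 2)) • NegQPlane.v K ^ n) *
      (NegQPlane.u K * NegQPlane.v K) ^ ((k - n) / 2)) :
    x₁ * x₂ + x₂ * x₁ =
      ((-1 : K) ^ ((n - 1) / 2) * 4) • (NegQPlane.u K * NegQPlane.v K) ^ (2 * k) := by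
  obtain ⟨p, hp⟩ := hn
  obtain ⟨q, hq⟩ := hk
  subst hp hq h₁ h₂
  have e1 : (3 * (2*q+1) + (2*p+1)) / 2 = 3*q+p+2 := by omega
  have e2 : (3 * (2*q+1) - (2*p+1)) / 2 = 3*q+1-p := by omega
  have e3 : ((2*q+1) + (2*p+1)) / 2 = q+p+1 := by omega
  have e4 : ((2*q+1) - (2*p+1)) / 2 = q-p := by omega
  have e5 : ((2*p+1) - 1) / 2 = p := by omega
  have e6 : 2 * (2*q+1) = 4*q+2 := by omega
  rw [e1, e2, e3, e4, e5, e6]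
  simp only [negQ_smul']
  rw [negQ_smul4']
  exact genMain' (NegQPlane.u K) (NegQPlane.v K) negQ_vu' p q (by omega)
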